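/- Stationary phase estimate: Let F : D → ℝ be a warping function such that w = (F⁻¹)′ ∈ Cⁿ(ℝ) satisfies w(x+y) ≤ C·w(x)·w(y) for all x,y ∈ ℝ and |w^{(k)}/w| ≤ D_k for constants D_k > 0, k = 0,…,n. Let C_n > 0 be a constant such that |Dⁿ_{w,x,η}(g)(s)| ≤ C_n (w(−s)/(2π|η|))ⁿ Σ_{k=0}^n |g^{(k)}(s)| for all g ∈ Cⁿ(ℝ), s, x ∈ ℝ, η ≠ 0. Suppose f ∈ C^{n+1}(ℝ) with w·f ∈ L¹(ℝ) satisfies: f ∈ C₀(ℝ) and w(−·)^j · f^{(k+1)} ∈ C₀(ℝ) for all 0 ≤ k ≤ j ≤ n, and C_n · ∫_ℝ w(−s)ⁿ |f^{(k+1)}(s)| ds ≤ c_n < ∞ for all 0 ≤ k ≤ n. Then for all x ∈ ℝ and η ≠ 0: |∫_ℝ (w(s+x)/w(x)) · f(s) · e^{−2πiη·F⁻¹(s+x)/w(x)} ds| ≤ (n+1)·c_n/(2π|η|)^{n+1}, and moreover the left-hand side is bounded by C·∫_ℝ w(s)|f(s)| ds. -/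

import Mathlib

/-!
With `φ(s) = exp(-2πiη F⁻¹(s+x)/w(x))` one has `φ' = -2πiη (w(s+x)/w(x)) φ`, so the integrand
is `-(2πiη)⁻¹ f φ'`, and `(w(x)/(2πiη)) (g/w(·+x)) φ` has derivative `D_{w,x,η}(g) φ - g φ`.
Integrating by parts once and then `n` more times therefore gives
`2πiη ∫ (w(s+x)/w(x)) f φ = ∫ Dⁿ_{w,x,η}(f') φ`, and the hypothesis on `C_n` bounds the right side.
The boundary terms vanish: Leibniz' rule and `|w^{(k)}| ≤ D_k w` give
`|(D^k_{w,x,η} f')^{(m)}(s)| ≲ w(-s)^k Σ_{j ≤ k+m} |f^{(j+1)}(s)|`, and `1/w(s+x) ≤ C w(-s)/w(x)`.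
The second bound is just `w(s+x) ≤ C w(s) w(x)`.
-/

open MeasureTheory Filter Topology Set
open scoped ENNReal NNReal

noncomputable section

/-- A warping function `F : D → ℝ` (with `D = ℝ` or `D = (0,∞)`), bundled together with its
inverse `Finv`, its derivative `F'` and the associated weight `w = (F⁻¹)'`.  The fields record:
bijectivity of `F : D → ℝ`, `F ∈ C¹(D)` with `F' > 0`, strict decrease of `F'` in `|t|`,
`w = (F⁻¹)'`, oddness of `F` when `D = ℝ`, and `v`-moderateness of `w` for some
submultiplicative weight `v`. -/
structure Warping where
  D : Set ℝ
  F : ℝ → ℝ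
  Finv : ℝ → ℝ
  F' : ℝ → ℝ
  w : ℝ → ℝ
  hD : D = Set.univ ∨ D = Set.Ioi 0
  left_inv : ∀ x ∈ D, Finv (F x) = x
  mem_inv : ∀ s : ℝ, Finv s ∈ D
  right_inv : ∀ s : ℝ, F (Finv s) = s
  F_hasDeriv : ∀ t ∈ D, HasDerivAt F (F' t) t
  F'_cont : ContinuousOn F' D
  F'_pos : ∀ t ∈ D, 0 < F' t
  F'_dec : ∀ t₀ ∈ D, ∀ t₁ ∈ D, |t₀| < |t₁| → F' t₁ < F' t₀
  w_hasDeriv : ∀ s : ℝ, HasDerivAt Finv (w s) s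
  w_pos : ∀ s : ℝ, 0 < w s
  odd_of_univ : D = Set.univ → ∀ t, F (-t) = -F t
  moderate : ∃ (v : ℝ → ℝ) (C₀ : ℝ), (∀ x, 0 < v x) ∧ (∀ x y, v (x + y) ≤ v x * v y) ∧
      ∀ x y, w (x + y) ≤ C₀ * v x * w y

/-- The frequency-side warped atom `g_x = √(F'(x)) · (T_{F(x)}θ) ∘ F` on `D`, extended by zero. -/
def gxFun (W : Warping) (θ : ℝ → ℂ) (x : ℝ) : ℝ → ℂ :=
  W.D.indicator fun t => (Real.sqrt (W.F' x) : ℂ) * θ (W.F t - W.F x)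

/-- The Fourier transform of the warped time-frequency atom `g_{x,ξ} = T_ξ (ǧ_x)`:
`ĝ_{x,ξ}(t) = e^{-2πiξt} g_x(t)`. -/
def hatAtom (W : Warping) (θ : ℝ → ℂ) (x ξ : ℝ) : ℝ → ℂ := fun t =>
  gxFun W θ x t * Complex.exp (-(2 * Real.pi * Complex.I * ξ * t))

/-- The warped time-frequency transform `V_{θ,F} f (x,ξ) = ⟨f, g_{x,ξ}⟩`, expressed on the
Fourier side (via Plancherel) in terms of `fh = f̂`:
`V_{θ,F} f (x,ξ) = ∫ f̂(t) conj(g_x(t)) e^{2πiξt} dt`. -/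
def warpedTransform (W : Warping) (θ fh : ℝ → ℂ) (x ξ : ℝ) : ℂ :=
  ∫ t : ℝ, fh t * (starRingEnd ℂ) (gxFun W θ x t) * Complex.exp (2 * Real.pi * Complex.I * ξ * t)

/-- The operator `D_{w,x,η}`, acting on `f ∈ C¹(ℝ)` by
`D_{w,x,η}(f)(s) = (w(x)/(2πiη)) · (f / w(·+x))'(s)`. -/
def Dop (w : ℝ → ℝ) (x η : ℝ) (f : ℝ → ℂ) : ℝ → ℂ := fun s =>
  ((w x : ℂ) / (2 * Real.pi * Complex.I * η)) * deriv (fun u => f u / (w (u + x) : ℂ)) s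

open Finset

def HasIteratedDerivBound {F : Type*} [NormedAddCommGroup F] [NormedSpace ℝ F] (h : ℝ → F)
    (M : ℕ) (b : ℕ → ℝ → ℝ) : Prop :=
  ∃ E, 0 ≤ E ∧ ∀ m ≤ M, ∀ s, ‖iteratedDeriv m h s‖ ≤ E * b m s

lemma HasIteratedDerivBound.mono {F : Type*} [NormedAddCommGroup F] [NormedSpace ℝ F]
    {h : ℝ → F} {M M' : ℕ} {b : ℕ → ℝ → ℝ} (hh : HasIteratedDerivBound h M b) (hM : M' ≤ M) :
    HasIteratedDerivBound h M' b :=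
  let ⟨E, hE, hb⟩ := hh
  ⟨E, hE, fun m hm => hb m (hm.trans hM)⟩

section InverseWeight

variable {w : ℝ → ℝ}

lemma mul_iteratedDeriv_succ_inv {r : ℕ} (hw : ContDiff ℝ (r + 1) w) (hw0 : ∀ s, w s ≠ 0)
    (s : ℝ) :
    w s * iteratedDeriv (r + 1) (fun t => (w t)⁻¹) s =
      -∑ i ∈ range (r + 1), ((r + 1).choose (i + 1) : ℝ) * iteratedDeriv (i + 1) w s *
        iteratedDeriv (r - i) (fun t => (w t)⁻¹) s := by
  have hLeibniz := iteratedDeriv_fun_mul (n := r + 1) (x := s) (g := fun t => (w t)⁻¹)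
    hw.contDiffAt (hw.inv hw0).contDiffAt
  have hone : (fun t => w t * (w t)⁻¹) = fun _ => (1 : ℝ) :=
    funext fun t => mul_inv_cancel₀ (hw0 t)
  rw [hone, iteratedDeriv_const, sum_range_succ'] at hLeibniz
  simp only [Nat.add_sub_add_right, Nat.choose_zero_right, Nat.cast_one, one_mul,
    iteratedDeriv_zero, Nat.sub_zero, Nat.add_one_ne_zero, if_false] at hLeibniz
  linear_combination -hLeibniz

lemma hasIteratedDerivBound_inv {D : ℕ → ℝ} (hpos : ∀ s, 0 < w s) {N : ℕ}
    (hw : ContDiff ℝ N w) (hD : ∀ k ≤ N, ∀ s, |iteratedDeriv k w s| ≤ D k * w s) :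
    HasIteratedDerivBound (fun t => (w t)⁻¹) N fun _ s => (w s)⁻¹ := by
  induction N with
  | zero =>
    refine ⟨1, zero_le_one, fun m hm s => ?_⟩
    obtain rfl : m = 0 := by omega
    simp [abs_of_pos (hpos s)]
  | succ N ih =>
    obtain ⟨E, hE, hbound⟩ := ih (hw.of_le (by norm_cast; omega)) fun k hk => hD k (by omega)
    set E' := ∑ i ∈ range (N + 1), ((N + 1).choose (i + 1) : ℝ) * (D (i + 1) * E)
    refine ⟨max E E', le_max_of_le_left hE, fun r hr s => ?_⟩
    have hw' : 0 ≤ (w s)⁻¹ := inv_nonneg.2 (hpos s).le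
    rcases Nat.lt_or_eq_of_le hr with hr | rfl
    · exact (hbound r (by omega) s).trans (mul_le_mul_of_nonneg_right (le_max_left _ _) hw')
    refine le_trans ?_ (mul_le_mul_of_nonneg_right (le_max_right _ _) hw')
    rw [Real.norm_eq_abs, ← mul_le_mul_iff_of_pos_left (hpos s), ← abs_of_pos (hpos s),
      ← abs_mul, mul_iteratedDeriv_succ_inv hw (fun s => (hpos s).ne') s, abs_neg,
      abs_of_pos (hpos s), mul_left_comm, mul_inv_cancel₀ (hpos s).ne', mul_one]
    refine (abs_sum_le_sum_abs _ _).trans (sum_le_sum fun i hi => ?_)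
    have hi : i < N + 1 := mem_range.1 hi
    have hq := hbound (N - i) (by omega) s
    rw [Real.norm_eq_abs] at hq
    rw [abs_mul, abs_mul, Nat.abs_cast, mul_assoc]
    refine mul_le_mul_of_nonneg_left ?_ (Nat.cast_nonneg _)
    calc |iteratedDeriv (i + 1) w s| * |iteratedDeriv (N - i) (fun t => (w t)⁻¹) s|
        ≤ (D (i + 1) * w s) * (E * (w s)⁻¹) :=
          mul_le_mul (hD (i + 1) (by omega) s) hq (abs_nonneg _)
            ((abs_nonneg _).trans (hD (i + 1) (by omega) s))
      _ = D (i + 1) * E := by field_simp [(hpos s).ne']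

end InverseWeight

section DerivSmulIterate

variable {q : ℝ → ℝ} {ψ : ℝ → ℝ} {b : ℕ → ℝ → ℝ}

lemma HasIteratedDerivBound.const_mul_deriv_smul {h : ℝ → ℂ} {M : ℕ}
    (hq : ContDiff ℝ (M + 1) q) (hh : ContDiff ℝ (M + 1) h)
    (hqb : HasIteratedDerivBound q (M + 1) fun _ => ψ) (hhb : HasIteratedDerivBound h (M + 1) b)
    (hb : ∀ s, Monotone (b · s)) (c : ℂ) :
    HasIteratedDerivBound (fun u => c * deriv (fun v => q v • h v) u) M
      fun m s => ψ s * b (m + 1) s := by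
  obtain ⟨A, hA, hqb⟩ := hqb
  obtain ⟨E, hE, hhb⟩ := hhb
  refine ⟨‖c‖ * 2 ^ (M + 1) * A * E, by positivity, fun m hm s => ?_⟩
  have hψ : 0 ≤ A * ψ s := (norm_nonneg _).trans (hqb 0 (Nat.zero_le _) s)
  have hLeibniz := norm_iteratedFDeriv_smul_le hq hh s (n := m + 1) (by norm_cast; omega)
  simp only [norm_iteratedFDeriv_eq_norm_iteratedDeriv] at hLeibniz
  have hterm : ∀ i ∈ range (m + 1 + 1), ((m + 1).choose i : ℝ) * ‖iteratedDeriv i q s‖ *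
      ‖iteratedDeriv (m + 1 - i) h s‖ ≤ ((m + 1).choose i : ℝ) * (A * ψ s * (E * b (m + 1) s)) := by
    intro i hi
    rw [mul_assoc]
    refine mul_le_mul_of_nonneg_left (mul_le_mul (hqb i (by simp at hi; omega) s) ?_
      (norm_nonneg _) hψ) (Nat.cast_nonneg _)
    exact (hhb _ (by omega) s).trans (mul_le_mul_of_nonneg_left (hb s (by omega)) hE)
  have hbound_nonneg : 0 ≤ A * ψ s * (E * b (m + 1) s) :=
    mul_nonneg hψ ((norm_nonneg _).trans (hhb (m + 1) (by omega) s))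
  rw [iteratedDeriv_const_mul_field, ← iteratedDeriv_succ', norm_mul]
  calc ‖c‖ * ‖iteratedDeriv (m + 1) (fun v => q v • h v) s‖
      ≤ ‖c‖ * (2 ^ (m + 1) * (A * ψ s * (E * b (m + 1) s))) := by
        refine mul_le_mul_of_nonneg_left (hLeibniz.trans ((sum_le_sum hterm).trans ?_))
          (norm_nonneg _)
        rw [← sum_mul, ← Nat.cast_sum, Nat.sum_range_choose, Nat.cast_pow, Nat.cast_ofNat]
    _ ≤ ‖c‖ * (2 ^ (M + 1) * (A * ψ s * (E * b (m + 1) s))) := by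
        gcongr
        exact one_le_two
    _ = ‖c‖ * 2 ^ (M + 1) * A * E * (ψ s * b (m + 1) s) := by ring

lemma HasIteratedDerivBound.iterate_const_mul_deriv_smul {h : ℝ → ℂ} {N : ℕ}
    (hq : ContDiff ℝ N q) (hh : ContDiff ℝ N h) (hqb : HasIteratedDerivBound q N fun _ => ψ)
    (hhb : HasIteratedDerivBound h N b) (hψ : ∀ s, 0 ≤ ψ s) (hb : ∀ s, Monotone (b · s))
    (c : ℂ) {k : ℕ} (hk : k ≤ N) :
    ContDiff ℝ ((N - k : ℕ) : WithTop ℕ∞)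
        ((fun g u => c * deriv (fun v => q v • g v) u)^[k] h) ∧
      HasIteratedDerivBound ((fun g u => c * deriv (fun v => q v • g v) u)^[k] h) (N - k)
        fun m s => ψ s ^ k * b (k + m) s := by
  induction k with
  | zero => simpa using ⟨hh, hhb⟩
  | succ k ih =>
    obtain ⟨hsmooth, hbound⟩ := ih (by omega)
    have hN : N - k = N - (k + 1) + 1 := by omega
    rw [hN] at hsmooth hbound
    have hqk : ContDiff ℝ ((N - (k + 1) + 1 : ℕ) : WithTop ℕ∞) q := hq.of_le (by norm_cast; omega)
    rw [Function.iterate_succ_apply']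
    refine ⟨contDiff_const.mul (hqk.smul hsmooth).deriv', ?_⟩
    have hstep := HasIteratedDerivBound.const_mul_deriv_smul (M := N - (k + 1))
      (by exact_mod_cast hqk) (by exact_mod_cast hsmooth) (hqb.mono (by omega)) hbound
      (fun s i j hij => by
        simp only
        exact mul_le_mul_of_nonneg_left (hb s (by omega)) (pow_nonneg (hψ s) k)) c
    convert hstep using 3 with m s
    rw [pow_succ]
    ring_nf

end DerivSmulIterate

lemma integral_eq_of_hasDerivAt_sub_of_tendsto_cocompact {E : Type*} [NormedAddCommGroup E]
    [NormedSpace ℝ E] [CompleteSpace E] {G a b : ℝ → E} (hG : ∀ s, HasDerivAt G (a s - b s) s)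
    (ha : Integrable a) (hb : Integrable b) (hlim : Tendsto G (cocompact ℝ) (𝓝 0)) :
    ∫ s, b s = ∫ s, a s := by
  have h := integral_of_hasDerivAt_of_tendsto hG (ha.sub hb) (hlim.mono_left atBot_le_cocompact)
    (hlim.mono_left atTop_le_cocompact)
  rw [integral_sub ha hb, sub_self] at h
  exact (sub_eq_zero.1 h).symm

section Warped

variable {w : ℝ → ℝ} {C : ℝ}

lemma inv_le_of_submultiplicative (hpos : ∀ s, 0 < w s)
    (hsub : ∀ x y, w (x + y) ≤ C * w x * w y) (s x : ℝ) :
    (w (s + x))⁻¹ ≤ C * w (-s) * (w x)⁻¹ := by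
  have h := hsub (s + x) (-s)
  rw [add_neg_cancel_comm] at h
  rw [inv_le_iff_one_le_mul₀' (hpos _)]
  calc 1 = w x * (w x)⁻¹ := (mul_inv_cancel₀ (hpos x).ne').symm
    _ ≤ C * w (s + x) * w (-s) * (w x)⁻¹ := by have := hpos x; gcongr
    _ = w (s + x) * (C * w (-s) * (w x)⁻¹) := by ring

lemma hasIteratedDerivBound_inv_comp_add {N : ℕ} {D : ℕ → ℝ} (hw : ContDiff ℝ N w)
    (hpos : ∀ s, 0 < w s) (hsub : ∀ x y, w (x + y) ≤ C * w x * w y)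
    (hD : ∀ k ≤ N, ∀ s, |iteratedDeriv k w s| ≤ D k * w s) (x : ℝ) :
    HasIteratedDerivBound (fun u => (w (u + x))⁻¹) N fun _ s => w (-s) := by
  obtain ⟨E, hE, hbound⟩ := hasIteratedDerivBound_inv hpos hw hD
  have hC : 0 ≤ C := by
    have h00 := hsub 0 0
    rw [add_zero] at h00
    nlinarith [hpos 0, mul_pos (hpos 0) (hpos 0)]
  have hx := hpos x
  refine ⟨E * C * (w x)⁻¹, by positivity, fun m hm s => ?_⟩
  rw [iteratedDeriv_comp_add_const (f := fun t => (w t)⁻¹)]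
  calc _ ≤ E * (w (s + x))⁻¹ := hbound m hm (s + x)
    _ ≤ E * (C * w (-s) * (w x)⁻¹) := by gcongr; exact inv_le_of_submultiplicative hpos hsub s x
    _ = _ := by ring

lemma Dop_eq_mul_deriv_smul (x η : ℝ) :
    Dop w x η = fun g u => ((w x : ℂ) / (2 * Real.pi * Complex.I * η)) *
      deriv (fun v => (w (v + x))⁻¹ • g v) u := by
  funext g u
  unfold Dop
  congr 2 with v
  rw [Complex.real_smul, Complex.ofReal_inv, div_eq_inv_mul]

lemma Dop_iterate_deriv_bound {n : ℕ} {D : ℕ → ℝ} (hw : ContDiff ℝ n w) (hpos : ∀ s, 0 < w s)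
    (hsub : ∀ x y, w (x + y) ≤ C * w x * w y)
    (hD : ∀ k ≤ n, ∀ s, |iteratedDeriv k w s| ≤ D k * w s) {f : ℝ → ℂ}
    (hf : ContDiff ℝ (n + 1) f) (x η : ℝ) {k : ℕ} (hk : k ≤ n) :
    ContDiff ℝ ((n - k : ℕ) : WithTop ℕ∞) ((Dop w x η)^[k] (deriv f)) ∧
      HasIteratedDerivBound ((Dop w x η)^[k] (deriv f)) (n - k)
        fun m s => w (-s) ^ k * ∑ j ∈ range (k + m + 1), ‖iteratedDeriv (j + 1) f s‖ := by
  have hq : ContDiff ℝ n fun u => (w (u + x))⁻¹ :=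
    (hw.comp (contDiff_id.add contDiff_const)).inv fun u => (hpos _).ne'
  have hbase : HasIteratedDerivBound (deriv f) n
      fun m s => ∑ j ∈ range (m + 1), ‖iteratedDeriv (j + 1) f s‖ := by
    refine ⟨1, zero_le_one, fun m _ s => ?_⟩
    rw [one_mul, ← iteratedDeriv_succ']
    exact single_le_sum (f := fun j => ‖iteratedDeriv (j + 1) f s‖) (fun _ _ => norm_nonneg _)
      (self_mem_range_succ m)
  rw [Dop_eq_mul_deriv_smul]
  exact HasIteratedDerivBound.iterate_const_mul_deriv_smul hq hf.deriv'
    (hasIteratedDerivBound_inv_comp_add hw hpos hsub hD x) hbase (fun s => (hpos _).le)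
    (fun s i j hij => sum_le_sum_of_subset_of_nonneg (range_mono (by omega))
      fun _ _ _ => norm_nonneg _) _ hk

end Warped

def warpedPhase (w Finv : ℝ → ℝ) (x η s : ℝ) : ℂ :=
  Complex.exp (-(2 * Real.pi * Complex.I * η * ((Finv (s + x) / w x : ℝ) : ℂ)))

def warpedIntegrand (w Finv : ℝ → ℝ) (x η : ℝ) (f : ℝ → ℂ) (s : ℝ) : ℂ :=
  ((w (s + x) / w x : ℝ) : ℂ) * f s * warpedPhase w Finv x η s

section Phase

variable {w Finv : ℝ → ℝ} {x η : ℝ}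

lemma norm_warpedPhase (s : ℝ) : ‖warpedPhase w Finv x η s‖ = 1 := by
  rw [warpedPhase, Complex.norm_exp]
  simp

lemma hasDerivAt_warpedPhase (hFinv : ∀ s, HasDerivAt Finv (w s) s) (s : ℝ) :
    HasDerivAt (warpedPhase w Finv x η)
      (-(2 * Real.pi * Complex.I * η * ((w (s + x) / w x : ℝ) : ℂ)) *
        warpedPhase w Finv x η s) s := by
  have h := ((((hFinv (s + x)).comp_add_const s x).div_const (w x)).ofReal_comp.const_mul
    (2 * Real.pi * Complex.I * η)).neg.cexp
  rw [mul_comm]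
  exact h

lemma continuous_warpedPhase (hFinv : ∀ s, HasDerivAt Finv (w s) s) :
    Continuous (warpedPhase w Finv x η) :=
  continuous_iff_continuousAt.2 fun s => (hasDerivAt_warpedPhase hFinv s).continuousAt

lemma hasDerivAt_div_mul_warpedPhase (hpos : ∀ s, 0 < w s)
    (hFinv : ∀ s, HasDerivAt Finv (w s) s) (hη : η ≠ 0) {g : ℝ → ℂ} {s : ℝ}
    (hg : DifferentiableAt ℝ (fun u => g u / (w (u + x) : ℂ)) s) :
    HasDerivAt (fun u => (w x : ℂ) / (2 * Real.pi * Complex.I * η) * (g u / (w (u + x) : ℂ)) *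
        warpedPhase w Finv x η u)
      (Dop w x η g s * warpedPhase w Finv x η s - g s * warpedPhase w Finv x η s) s := by
  refine ((hg.hasDerivAt.const_mul _).mul (hasDerivAt_warpedPhase hFinv s)).congr_deriv ?_
  have hwx : (w x : ℂ) ≠ 0 := Complex.ofReal_ne_zero.2 (hpos x).ne'
  have hwsx : (w (s + x) : ℂ) ≠ 0 := Complex.ofReal_ne_zero.2 (hpos _).ne'
  have hπ : (Real.pi : ℂ) ≠ 0 := Complex.ofReal_ne_zero.2 Real.pi_ne_zero
  have hη' : (η : ℂ) ≠ 0 := Complex.ofReal_ne_zero.2 hη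
  simp only [Dop, Complex.ofReal_div]
  field_simp
  ring

def phasePrimitive (w Finv : ℝ → ℝ) (x η : ℝ) (n : ℕ) (f : ℝ → ℂ) (s : ℝ) : ℂ :=
  f s * warpedPhase w Finv x η s + ∑ k ∈ range n,
    (w x : ℂ) / (2 * Real.pi * Complex.I * η) * ((Dop w x η)^[k] (deriv f) s / (w (s + x) : ℂ)) *
      warpedPhase w Finv x η s

lemma hasDerivAt_phasePrimitive (hpos : ∀ s, 0 < w s) (hFinv : ∀ s, HasDerivAt Finv (w s) s)
    (hη : η ≠ 0) {n : ℕ} {f : ℝ → ℂ} {s : ℝ} (hf : DifferentiableAt ℝ f s)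
    (hg : ∀ k < n, DifferentiableAt ℝ (fun u => (Dop w x η)^[k] (deriv f) u / (w (u + x) : ℂ)) s) :
    HasDerivAt (phasePrimitive w Finv x η n f)
      ((Dop w x η)^[n] (deriv f) s * warpedPhase w Finv x η s -
        2 * Real.pi * Complex.I * η * warpedIntegrand w Finv x η f s) s := by
  have hsum := HasDerivAt.fun_sum (u := range n) fun k hk =>
    hasDerivAt_div_mul_warpedPhase hpos hFinv hη (hg k (mem_range.1 hk))
  refine ((hf.hasDerivAt.mul (hasDerivAt_warpedPhase hFinv s)).add hsum).congr_deriv ?_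
  simp only [← Function.iterate_succ_apply' (Dop w x η)]
  rw [sum_range_sub (fun k => (Dop w x η)^[k] (deriv f) s * warpedPhase w Finv x η s)]
  simp only [Function.iterate_zero, id_eq, warpedIntegrand]
  ring

end Phase

section Estimates

variable {w Finv : ℝ → ℝ} {C x η : ℝ}

lemma differentiable_Dop_iterate_div {n : ℕ} (hw : ContDiff ℝ n w) (hpos : ∀ s, 0 < w s)
    {f : ℝ → ℂ} {k : ℕ} (hk : k < n)
    (hg : ContDiff ℝ ((n - k : ℕ) : WithTop ℕ∞) ((Dop w x η)^[k] (deriv f))) :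
    Differentiable ℝ fun u => (Dop w x η)^[k] (deriv f) u / (w (u + x) : ℂ) := by
  have hn : (n : WithTop ℕ∞) ≠ 0 := by exact_mod_cast (show n ≠ 0 by omega)
  have hnk : ((n - k : ℕ) : WithTop ℕ∞) ≠ 0 := by exact_mod_cast (show n - k ≠ 0 by omega)
  have hwx : Differentiable ℝ fun u => (w (u + x) : ℂ) :=
    Complex.ofRealCLM.differentiable.comp
      ((hw.differentiable hn).comp (differentiable_id.add_const x))
  exact (hg.differentiable hnk).div hwx fun u => Complex.ofReal_ne_zero.2 (hpos _).ne'

lemma tendsto_Dop_iterate_div_cocompact {n : ℕ} {D : ℕ → ℝ} (hw : ContDiff ℝ n w)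
    (hpos : ∀ s, 0 < w s) (hsub : ∀ x y, w (x + y) ≤ C * w x * w y)
    (hD : ∀ k ≤ n, ∀ s, |iteratedDeriv k w s| ≤ D k * w s) {f : ℝ → ℂ}
    (hf : ContDiff ℝ (n + 1) f)
    (hfd : ∀ j ≤ n, ∀ i ≤ j,
      Tendsto (fun s => w (-s) ^ j • iteratedDeriv (i + 1) f s) (cocompact ℝ) (𝓝 0))
    (x η : ℝ) {k : ℕ} (hk : k < n) :
    Tendsto (fun s => (Dop w x η)^[k] (deriv f) s / (w (s + x) : ℂ)) (cocompact ℝ) (𝓝 0) := by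
  obtain ⟨-, E, -, hbound⟩ := Dop_iterate_deriv_bound hw hpos hsub hD hf x η hk.le
  have hlim : Tendsto (fun s => E * C * (w x)⁻¹ *
      ∑ j ∈ range (k + 1), ‖w (-s) ^ (k + 1) • iteratedDeriv (j + 1) f s‖) (cocompact ℝ) (𝓝 0) := by
    simpa using (tendsto_finsetSum (range (k + 1)) fun j hj =>
      (hfd (k + 1) hk j (by simp at hj; omega)).norm).const_mul (E * C * (w x)⁻¹)
  refine squeeze_zero_norm (fun s => ?_) hlim
  have hg := hbound 0 (Nat.zero_le _) s
  rw [iteratedDeriv_zero] at hg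
  rw [norm_div, Complex.norm_real, Real.norm_of_nonneg (hpos _).le, div_eq_mul_inv]
  calc ‖(Dop w x η)^[k] (deriv f) s‖ * (w (s + x))⁻¹
      ≤ E * (w (-s) ^ k * ∑ j ∈ range (k + 0 + 1), ‖iteratedDeriv (j + 1) f s‖) *
          (C * w (-s) * (w x)⁻¹) :=
        mul_le_mul hg (inv_le_of_submultiplicative hpos hsub s x)
          (inv_nonneg.2 (hpos _).le) ((norm_nonneg _).trans hg)
    _ = _ := by
        simp only [norm_smul, Real.norm_of_nonneg (pow_nonneg (hpos (-s)).le _), add_zero,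
          ← mul_sum]
        ring

lemma tendsto_phasePrimitive_cocompact {n : ℕ} {f : ℝ → ℂ}
    (hf : Tendsto f (cocompact ℝ) (𝓝 0))
    (hg : ∀ k < n, Tendsto (fun s => (Dop w x η)^[k] (deriv f) s / (w (s + x) : ℂ))
      (cocompact ℝ) (𝓝 0)) :
    Tendsto (phasePrimitive w Finv x η n f) (cocompact ℝ) (𝓝 0) := by
  have hsum : Tendsto (fun s => f s + ∑ k ∈ range n, (w x : ℂ) / (2 * Real.pi * Complex.I * η) *
      ((Dop w x η)^[k] (deriv f) s / (w (s + x) : ℂ))) (cocompact ℝ) (𝓝 0) := by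
    simpa using hf.add (tendsto_finsetSum (range n) fun k hk => (hg k (mem_range.1 hk)).const_mul
      ((w x : ℂ) / (2 * Real.pi * Complex.I * η)))
  refine squeeze_zero_norm (fun s => le_of_eq ?_) (tendsto_norm_zero.comp hsum)
  rw [phasePrimitive, Function.comp_apply, ← sum_mul, ← add_mul, norm_mul, norm_warpedPhase,
    mul_one]

lemma norm_warpedIntegrand_le (hpos : ∀ s, 0 < w s) (hsub : ∀ x y, w (x + y) ≤ C * w x * w y)
    (f : ℝ → ℂ) (s : ℝ) : ‖warpedIntegrand w Finv x η f s‖ ≤ C * (w s * ‖f s‖) := by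
  rw [warpedIntegrand, norm_mul, norm_mul, norm_warpedPhase, mul_one, Complex.norm_real,
    Real.norm_of_nonneg (div_pos (hpos _) (hpos x)).le, div_mul_eq_mul_div, div_le_iff₀ (hpos x)]
  calc w (s + x) * ‖f s‖ ≤ C * w s * w x * ‖f s‖ :=
        mul_le_mul_of_nonneg_right (hsub s x) (norm_nonneg _)
    _ = C * (w s * ‖f s‖) * w x := by ring

lemma integrable_mul_norm_of_integrable_smul (hpos : ∀ s, 0 < w s) {f : ℝ → ℂ}
    (hf : Integrable fun s => w s • f s) : Integrable fun s => w s * ‖f s‖ := by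
  simpa [norm_smul, abs_of_pos (hpos _)] using hf.norm

lemma integrable_warpedIntegrand (hw : Continuous w) (hpos : ∀ s, 0 < w s)
    (hsub : ∀ x y, w (x + y) ≤ C * w x * w y) (hFinv : ∀ s, HasDerivAt Finv (w s) s)
    {f : ℝ → ℂ} (hf : Continuous f) (hfL1 : Integrable fun s => w s • f s) :
    Integrable (warpedIntegrand w Finv x η f) := by
  have hcont : Continuous (warpedIntegrand w Finv x η f) :=
    ((Complex.continuous_ofReal.comp ((hw.comp (continuous_add_const x)).div_const _)).mul
      hf).mul (continuous_warpedPhase hFinv)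
  exact ((integrable_mul_norm_of_integrable_smul hpos hfL1).const_mul C).mono'
    hcont.aestronglyMeasurable (ae_of_all _ (norm_warpedIntegrand_le hpos hsub f))

lemma norm_integral_warpedIntegrand_le (hpos : ∀ s, 0 < w s)
    (hsub : ∀ x y, w (x + y) ≤ C * w x * w y) {f : ℝ → ℂ}
    (hfL1 : Integrable fun s => w s • f s) :
    ‖∫ s, warpedIntegrand w Finv x η f s‖ ≤ C * ∫ s, w s * ‖f s‖ :=
  (norm_integral_le_of_norm_le ((integrable_mul_norm_of_integrable_smul hpos hfL1).const_mul C)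
    (ae_of_all _ (norm_warpedIntegrand_le hpos hsub f))).trans_eq (integral_const_mul _ _)

lemma integrable_and_norm_integral_le {n : ℕ} {v f : ℝ → ℂ} {ψ : ℝ → ℝ} {Cn cn L : ℝ}
    (hL : 0 < L) (hv : Continuous v)
    (hvle : ∀ s, ‖v s‖ ≤
      Cn * (ψ s / L) ^ n * ∑ k ∈ range (n + 1), ‖iteratedDeriv k (deriv f) s‖)
    (hint : ∀ k ≤ n, Integrable fun s => ψ s ^ n * ‖iteratedDeriv (k + 1) f s‖)
    (hcn : ∀ k ≤ n, Cn * ∫ s, ψ s ^ n * ‖iteratedDeriv (k + 1) f s‖ ≤ cn) :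
    Integrable v ∧ ‖∫ s, v s‖ ≤ (n + 1) * cn / L ^ n := by
  have hint' : ∀ k ∈ range (n + 1), Integrable fun s => ψ s ^ n * ‖iteratedDeriv (k + 1) f s‖ :=
    fun k hk => hint k (by simp at hk; omega)
  set B := fun s => Cn / L ^ n * ∑ k ∈ range (n + 1), ψ s ^ n * ‖iteratedDeriv (k + 1) f s‖
  have hB : ∀ s, ‖v s‖ ≤ B s := fun s => (hvle s).trans_eq <| by
    simp only [B, div_pow, mul_sum]
    refine sum_congr rfl fun k _ => ?_
    rw [iteratedDeriv_succ']
    ring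
  have hBint : Integrable B := (integrable_finsetSum _ hint').const_mul _
  refine ⟨hBint.mono' hv.aestronglyMeasurable (ae_of_all _ hB), ?_⟩
  calc ‖∫ s, v s‖ ≤ ∫ s, B s := norm_integral_le_of_norm_le hBint (ae_of_all _ hB)
    _ = (∑ k ∈ range (n + 1), Cn * ∫ s, ψ s ^ n * ‖iteratedDeriv (k + 1) f s‖) / L ^ n := by
        rw [integral_const_mul, integral_finsetSum _ hint', ← mul_sum]
        ring
    _ ≤ (∑ _k ∈ range (n + 1), cn) / L ^ n := by
        gcongr with k hk
        exact hcn k (by simp at hk; omega)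
    _ = (n + 1) * cn / L ^ n := by simp

lemma integral_warpedIntegrand_eq {n : ℕ} {D : ℕ → ℝ} (hw : ContDiff ℝ n w)
    (hpos : ∀ s, 0 < w s) (hsub : ∀ x y, w (x + y) ≤ C * w x * w y)
    (hD : ∀ k ≤ n, ∀ s, |iteratedDeriv k w s| ≤ D k * w s)
    (hFinv : ∀ s, HasDerivAt Finv (w s) s) (hη : η ≠ 0) {f : ℝ → ℂ}
    (hf : ContDiff ℝ (n + 1) f) (hfL1 : Integrable fun s => w s • f s)
    (hfC0 : Tendsto f (cocompact ℝ) (𝓝 0))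
    (hfd : ∀ j ≤ n, ∀ i ≤ j,
      Tendsto (fun s => w (-s) ^ j • iteratedDeriv (i + 1) f s) (cocompact ℝ) (𝓝 0))
    (hv : Integrable fun s => (Dop w x η)^[n] (deriv f) s * warpedPhase w Finv x η s) :
    2 * Real.pi * Complex.I * η * ∫ s, warpedIntegrand w Finv x η f s =
      ∫ s, (Dop w x η)^[n] (deriv f) s * warpedPhase w Finv x η s := by
  have hsmooth k (hk : k ≤ n) := (Dop_iterate_deriv_bound hw hpos hsub hD hf x η hk).1
  rw [← integral_const_mul]
  exact integral_eq_of_hasDerivAt_sub_of_tendsto_cocompact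
    (fun s => hasDerivAt_phasePrimitive hpos hFinv hη (hf.differentiable (by simp) s)
      fun k hk => differentiable_Dop_iterate_div hw hpos hk (hsmooth k hk.le) s)
    hv ((integrable_warpedIntegrand hw.continuous hpos hsub hFinv hf.continuous hfL1).const_mul _)
    (tendsto_phasePrimitive_cocompact hfC0 fun k hk =>
      tendsto_Dop_iterate_div_cocompact hw hpos hsub hD hf hfd x η hk)

end Estimates

theorem stationary_phase_estimate_general
    (W : Warping) (n : ℕ) (C : ℝ)
    (hw : ContDiff ℝ n W.w)
    (hwsub : ∀ x y : ℝ, W.w (x + y) ≤ C * W.w x * W.w y)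
    (Dk : ℕ → ℝ)
    (hder : ∀ k ≤ n, ∀ s : ℝ, |iteratedDeriv k W.w s / W.w s| ≤ Dk k)
    (Cn : ℝ)
    (hCnbound : ∀ g : ℝ → ℂ, ContDiff ℝ n g → ∀ s x η : ℝ, η ≠ 0 →
      ‖(Dop W.w x η)^[n] g s‖ ≤
        Cn * (W.w (-s) / (2 * Real.pi * |η|)) ^ n *
          ∑ k ∈ Finset.range (n + 1), ‖iteratedDeriv k g s‖)
    (f : ℝ → ℂ) (hf : ContDiff ℝ (n + 1) f)
    (hfL1 : Integrable (fun s : ℝ => W.w s • f s) volume)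
    (hfC0 : Tendsto f (cocompact ℝ) (nhds 0))
    (hfdC0 : ∀ j ≤ n, ∀ k ≤ j,
      Tendsto (fun s : ℝ => (W.w (-s)) ^ j • iteratedDeriv (k + 1) f s) (cocompact ℝ) (nhds 0))
    (cn : ℝ)
    (hint : ∀ k ≤ n, Integrable (fun s : ℝ => W.w (-s) ^ n * ‖iteratedDeriv (k + 1) f s‖) volume)
    (hcn : ∀ k ≤ n, Cn * (∫ s : ℝ, W.w (-s) ^ n * ‖iteratedDeriv (k + 1) f s‖) ≤ cn)
    (x η : ℝ) (hη : η ≠ 0) :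
    ‖∫ s : ℝ, ((W.w (s + x) / W.w x : ℝ) : ℂ) * f s *
        Complex.exp (-(2 * Real.pi * Complex.I * η * ((W.Finv (s + x) / W.w x : ℝ) : ℂ)))‖ ≤
      (n + 1) * cn / (2 * Real.pi * |η|) ^ (n + 1) ∧
    ‖∫ s : ℝ, ((W.w (s + x) / W.w x : ℝ) : ℂ) * f s *
        Complex.exp (-(2 * Real.pi * Complex.I * η * ((W.Finv (s + x) / W.w x : ℝ) : ℂ)))‖ ≤
      C * ∫ s : ℝ, W.w s * ‖f s‖ := by
  have hpos := W.w_pos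
  have hD : ∀ k ≤ n, ∀ s, |iteratedDeriv k W.w s| ≤ Dk k * W.w s := fun k hk s => by
    have h := hder k hk s
    rwa [abs_div, abs_of_pos (hpos s), div_le_iff₀ (hpos s)] at h
  have hL : 0 < 2 * Real.pi * |η| := by positivity
  have hβ : ‖2 * Real.pi * Complex.I * η‖ = 2 * Real.pi * |η| := by
    simp [abs_of_pos Real.pi_pos]
  obtain ⟨hv, hv_le⟩ := integrable_and_norm_integral_le
    (v := fun s => (Dop W.w x η)^[n] (deriv f) s * warpedPhase W.w W.Finv x η s) hL
    (((Dop_iterate_deriv_bound hw hpos hwsub hD hf x η le_rfl).1.continuous).mul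
      (continuous_warpedPhase W.w_hasDeriv))
    (fun s => by
      rw [norm_mul, norm_warpedPhase, mul_one]
      exact hCnbound _ hf.deriv' s x η hη)
    hint hcn
  have hibp := integral_warpedIntegrand_eq hw hpos hwsub hD W.w_hasDeriv hη hf hfL1 hfC0 hfdC0 hv
  show ‖∫ s, warpedIntegrand W.w W.Finv x η f s‖ ≤ _ ∧ ‖∫ s, warpedIntegrand W.w W.Finv x η f s‖ ≤ _
  refine ⟨?_, norm_integral_warpedIntegrand_le hpos hwsub hfL1⟩
  calc ‖∫ s, warpedIntegrand W.w W.Finv x η f s‖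
      = ‖∫ s, (Dop W.w x η)^[n] (deriv f) s * warpedPhase W.w W.Finv x η s‖ /
          (2 * Real.pi * |η|) := by
        rw [← hibp, norm_mul, hβ]
        field_simp
    _ ≤ (n + 1) * cn / (2 * Real.pi * |η|) ^ n / (2 * Real.pi * |η|) := by gcongr
    _ = (n + 1) * cn / (2 * Real.pi * |η|) ^ (n + 1) := by rw [pow_succ, div_div]

/-- **Stationary phase estimate.** Let `F : D → ℝ` be a warping function such
that `w = (F⁻¹)' ∈ Cⁿ(ℝ)` satisfies `w(x+y) ≤ C w(x) w(y)` and `|w^{(k)}/w| ≤ D_k` for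
`k = 0,…,n`.  Let `C_n > 0` be a constant such that
`|Dⁿ_{w,x,η}(g)(s)| ≤ C_n (w(−s)/(2π|η|))ⁿ Σ_{k=0}^n |g^{(k)}(s)|` for all `g ∈ Cⁿ(ℝ)`.
Suppose `f ∈ C^{n+1}(ℝ)` with `w·f ∈ L¹(ℝ)`, `f ∈ C₀(ℝ)`,
`w(−·)^j f^{(k+1)} ∈ C₀(ℝ)` for `0 ≤ k ≤ j ≤ n`, and
`C_n ∫ w(−s)ⁿ |f^{(k+1)}(s)| ds ≤ c_n < ∞` for all `0 ≤ k ≤ n`.  Then for all `x` and `η ≠ 0`,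
`|∫ (w(s+x)/w(x)) f(s) e^{−2πiη F⁻¹(s+x)/w(x)} ds| ≤ (n+1) c_n/(2π|η|)^{n+1}`,
and the left-hand side is also bounded by `C ∫ w(s)|f(s)| ds`. -/
theorem stationary_phase_estimate
    (W : Warping) (n : ℕ) (C : ℝ)
    (hw : ContDiff ℝ n W.w)
    (hwsub : ∀ x y : ℝ, W.w (x + y) ≤ C * W.w x * W.w y)
    (Dk : ℕ → ℝ) (hDkpos : ∀ k ≤ n, 0 < Dk k)
    (hder : ∀ k ≤ n, ∀ s : ℝ, |iteratedDeriv k W.w s / W.w s| ≤ Dk k)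
    (Cn : ℝ) (hCn : 0 < Cn)
    (hCnbound : ∀ g : ℝ → ℂ, ContDiff ℝ n g → ∀ s x η : ℝ, η ≠ 0 →
      ‖(Dop W.w x η)^[n] g s‖ ≤
        Cn * (W.w (-s) / (2 * Real.pi * |η|)) ^ n *
          ∑ k ∈ Finset.range (n + 1), ‖iteratedDeriv k g s‖)
    (f : ℝ → ℂ) (hf : ContDiff ℝ (n + 1) f)
    (hfL1 : Integrable (fun s : ℝ => W.w s • f s) volume)
    (hfC0 : Tendsto f (cocompact ℝ) (nhds 0))
    (hfdC0 : ∀ j ≤ n, ∀ k ≤ j,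
      Tendsto (fun s : ℝ => (W.w (-s)) ^ j • iteratedDeriv (k + 1) f s) (cocompact ℝ) (nhds 0))
    (cn : ℝ)
    (hint : ∀ k ≤ n, Integrable (fun s : ℝ => W.w (-s) ^ n * ‖iteratedDeriv (k + 1) f s‖) volume)
    (hcn : ∀ k ≤ n, Cn * (∫ s : ℝ, W.w (-s) ^ n * ‖iteratedDeriv (k + 1) f s‖) ≤ cn)
    (x η : ℝ) (hη : η ≠ 0) :
    ‖∫ s : ℝ, ((W.w (s + x) / W.w x : ℝ) : ℂ) * f s *
        Complex.exp (-(2 * Real.pi * Complex.I * η * ((W.Finv (s + x) / W.w x : ℝ) : ℂ)))‖ ≤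
      (n + 1) * cn / (2 * Real.pi * |η|) ^ (n + 1) ∧
    ‖∫ s : ℝ, ((W.w (s + x) / W.w x : ℝ) : ℂ) * f s *
        Complex.exp (-(2 * Real.pi * Complex.I * η * ((W.Finv (s + x) / W.w x : ℝ) : ℂ)))‖ ≤
      C * ∫ s : ℝ, W.w s * ‖f s‖ :=
  stationary_phase_estimate_general W n C hw hwsub Dk hder Cn hCnbound f hf hfL1 hfC0 hfdC0 cn hint
    hcn x η hη
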